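/- arXiv:1005.2162 — 6 statements merged into one kernel-verified Lean document; each statement's English description precedes it below -/
import Mathlib

section
/- Let A be a symmetric n×n matrix with signature (q, n-q, 0) (q positive and n-q negative eigenvalues, no zero eigenvalue). Then the mn×mn block matrix G with zero diagonal blocks and all off-diagonal blocks equal to A has signature (q + (m-1)(n-q), (n-q) + q(m-1), 0). -/
/-!
`G` is the Kronecker product `B ⊗ₖ A` of `A` with the adjacency matrix `B = J - I` of the complete
graph on `m` vertices. Diagonalising both factors by unitaries shows that the eigenvalues of
`B ⊗ₖ A` are the products `μᵢ λⱼ` of eigenvalues of `B` and `A`. An eigenvector `v` of `B` with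
eigenvalue `μ` satisfies `(μ + 1) vₖ = ∑ₗ vₗ` for all `k`, so `μ ∈ {m - 1, -1}`, and since
`tr B = 0` the value `m - 1` occurs exactly once. Counting signs of the products finishes the proof.
-/

open Matrix

/-- The `mn × mn` block matrix with zero diagonal blocks and all off-diagonal
blocks equal to `A`. -/
def blockConst (m n : ℕ) (A : Matrix (Fin n) (Fin n) ℝ) :
    Matrix (Fin m × Fin n) (Fin m × Fin n) ℝ :=
  fun p q => if p.1 = q.1 then 0 else A p.2 q.2

open Polynomial Finset
open scoped Kronecker

theorem Matrix.IsHermitian.charpoly_kronecker {𝕜 : Type*} [RCLike 𝕜] {ι κ : Type*} [Fintype ι]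
    [DecidableEq ι] [Fintype κ] [DecidableEq κ] {A : Matrix ι ι 𝕜} {B : Matrix κ κ 𝕜}
    (hA : A.IsHermitian) (hB : B.IsHermitian) :
    (A ⊗ₖ B).charpoly =
      ∏ p : ι × κ, (X - C ((hA.eigenvalues p.1 * hB.eigenvalues p.2 : ℝ) : 𝕜)) := by
  have hU := Unitary.star_mul_self_of_mem hA.eigenvectorUnitary.2
  have hV := Unitary.star_mul_self_of_mem hB.eigenvectorUnitary.2
  conv_lhs => rw [hA.spectral_theorem, hB.spectral_theorem]
  rw [Unitary.conjStarAlgAut_apply, Unitary.conjStarAlgAut_apply, mul_kronecker_mul,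
    mul_kronecker_mul, Matrix.mul_assoc, charpoly_mul_comm, Matrix.mul_assoc, ← mul_kronecker_mul,
    hU, hV, one_kronecker_one, Matrix.mul_one, diagonal_kronecker_diagonal, charpoly_diagonal]
  simp

theorem Matrix.IsHermitian.map_eigenvalues_eq_of_charpoly_eq {𝕜 : Type*} [RCLike 𝕜]
    {ι κ : Type*} [Fintype ι] [DecidableEq ι] [Fintype κ] {A : Matrix ι ι 𝕜}
    (hA : A.IsHermitian) {c : κ → ℝ} (h : A.charpoly = ∏ j, (X - C (c j : 𝕜))) :
    univ.val.map hA.eigenvalues = univ.val.map c := by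
  apply Multiset.map_injective (RCLike.ofReal_injective (K := 𝕜))
  rw [Multiset.map_map, Multiset.map_map, ← hA.roots_charpoly_eq_eigenvalues, h,
    ← roots_multiset_prod_X_sub_C (univ.val.map _), Multiset.map_map]
  rfl

theorem Finset.card_filter_univ_eq_of_map_eq {α ι κ : Type*} [Fintype ι] [Fintype κ]
    {a : ι → α} {b : κ → α} (h : univ.val.map a = univ.val.map b) (p : α → Prop)
    [DecidablePred p] : #{i | p (a i)} = #{j | p (b j)} := by
  simpa [Multiset.countP_map, Finset.card, Finset.filter] using congrArg (Multiset.countP p) h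

theorem Finset.card_filter_univ_prod_and {ι κ : Type*} [Fintype ι] [Fintype κ] (P : ι → Prop)
    (Q : κ → Prop) [DecidablePred P] [DecidablePred Q] :
    #{p : ι × κ | P p.1 ∧ Q p.2} = #{i | P i} * #{j | Q j} := by
  rw [← card_product, ← filter_product, univ_product_univ]

section SignCount

variable {R : Type*} [Ring R] [LinearOrder R] [IsStrictOrderedRing R] {ι κ : Type*} [Fintype ι]
  [Fintype κ] (a : ι → R) (b : κ → R)

theorem card_filter_mul_pos :
    #{p : ι × κ | 0 < a p.1 * b p.2} =
      #{i | 0 < a i} * #{j | 0 < b j} + #{i | a i < 0} * #{j | b j < 0} := by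
  classical
  have hsplit : univ.filter (fun p : ι × κ => 0 < a p.1 * b p.2) =
      univ.filter (fun p => 0 < a p.1 ∧ 0 < b p.2) ∪
        univ.filter (fun p => a p.1 < 0 ∧ b p.2 < 0) := by
    ext; simp [mul_pos_iff]
  rw [hsplit, card_union_of_disjoint (disjoint_filter.2 fun _ _ h₁ h₂ => lt_asymm h₁.1 h₂.1)]
  exact congrArg₂ (· + ·) (card_filter_univ_prod_and (0 < a ·) (0 < b ·))
    (card_filter_univ_prod_and (a · < 0) (b · < 0))

theorem card_filter_mul_neg :
    #{p : ι × κ | a p.1 * b p.2 < 0} =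
      #{i | 0 < a i} * #{j | b j < 0} + #{i | a i < 0} * #{j | 0 < b j} := by
  classical
  have hsplit : univ.filter (fun p : ι × κ => a p.1 * b p.2 < 0) =
      univ.filter (fun p => 0 < a p.1 ∧ b p.2 < 0) ∪
        univ.filter (fun p => a p.1 < 0 ∧ 0 < b p.2) := by
    ext; simp [mul_neg_iff]
  rw [hsplit, card_union_of_disjoint (disjoint_filter.2 fun _ _ h₁ h₂ => lt_asymm h₁.1 h₂.1)]
  exact congrArg₂ (· + ·) (card_filter_univ_prod_and (0 < a ·) (b · < 0))
    (card_filter_univ_prod_and (a · < 0) (0 < b ·))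

end SignCount

section SumZero

variable {K : Type*} [Field K] [LinearOrder K] [IsStrictOrderedRing K] {V : Type*} [Fintype V]
  {μ : V → K}

theorem card_filter_pos_eq_one_of_sum_eq_zero (hV : 2 ≤ Fintype.card V)
    (hμ : ∀ i, μ i = Fintype.card V - 1 ∨ μ i = -1) (hsum : ∑ i, μ i = 0) :
    #{i | 0 < μ i} = 1 := by
  have hc : (1 : K) < Fintype.card V := by exact_mod_cast hV
  have hshift : ∀ i, μ i + 1 = if 0 < μ i then (Fintype.card V : K) else 0 := fun i => by
    rcases hμ i with h | h <;> rw [h]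
    · rw [if_pos (by linarith)]; ring
    · rw [if_neg (by norm_num)]; ring
  have hcount : (#{i | 0 < μ i} : K) * Fintype.card V = 1 * Fintype.card V := by
    calc (#{i | 0 < μ i} : K) * Fintype.card V
        = ∑ i, if 0 < μ i then (Fintype.card V : K) else 0 := by
          rw [← sum_filter, sum_const, nsmul_eq_mul]
      _ = ∑ i, (μ i + 1) := sum_congr rfl fun i _ => (hshift i).symm
      _ = 1 * Fintype.card V := by
          rw [sum_add_distrib, hsum, sum_const, card_univ, nsmul_eq_mul]; ring
  exact_mod_cast mul_right_cancel₀ (by positivity) hcount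

theorem card_filter_neg_eq_card_sub_one_of_sum_eq_zero (hV : 2 ≤ Fintype.card V)
    (hμ : ∀ i, μ i = Fintype.card V - 1 ∨ μ i = -1) (hsum : ∑ i, μ i = 0) :
    #{i | μ i < 0} = Fintype.card V - 1 := by
  have hc : (1 : K) < Fintype.card V := by exact_mod_cast hV
  have hsplit := card_filter_add_card_filter_not (s := univ) fun i => 0 < μ i
  rw [card_filter_pos_eq_one_of_sum_eq_zero hV hμ hsum, card_univ] at hsplit
  rw [← hsplit, Nat.add_sub_cancel_left]
  congr 1
  refine filter_congr fun i _ => ?_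
  rcases hμ i with h | h <;> rw [h] <;> constructor <;> intro <;> linarith

end SumZero

theorem Matrix.IsHermitian.eigenvalues_ne_zero {𝕜 : Type*} [RCLike 𝕜] {ι : Type*} [Fintype ι]
    [DecidableEq ι] {A : Matrix ι ι 𝕜} (hA : A.IsHermitian) (h : IsUnit A.det) (i : ι) :
    hA.eigenvalues i ≠ 0 := fun h0 =>
  h.ne_zero <| by rw [hA.det_eq_prod_eigenvalues]; exact prod_eq_zero (mem_univ i) (by simp [h0])

namespace SimpleGraph

variable {V : Type*} [Fintype V] [DecidableEq V]

theorem eq_card_sub_one_or_eq_neg_one_of_adjMatrix_top_mulVec {K : Type*} [Field K]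
    {v : V → K} {μ : K} (hv : v ≠ 0) (h : (⊤ : SimpleGraph V).adjMatrix K *ᵥ v = μ • v) :
    μ = Fintype.card V - 1 ∨ μ = -1 := by
  have hrow : ∀ k, (μ + 1) * v k = ∑ l, v l := fun k => by
    have hk := congrFun h k
    rw [adjMatrix_mulVec_apply, neighborFinset_top, Pi.smul_apply, smul_eq_mul] at hk
    rw [Fintype.sum_eq_add_sum_compl k, hk]
    ring
  obtain ⟨k, hk⟩ := Function.ne_iff.1 hv
  by_cases hsum : ∑ l, v l = 0
  · right
    have := hrow k
    rw [hsum] at this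
    linear_combination (mul_eq_zero.1 this).resolve_right hk
  · left
    have htotal : (μ + 1) * ∑ l, v l = Fintype.card V * ∑ l, v l := by
      rw [mul_sum, sum_congr rfl fun k _ => hrow k, sum_const, card_univ, nsmul_eq_mul]
    linear_combination mul_right_cancel₀ hsum htotal

variable (hB : ((⊤ : SimpleGraph V).adjMatrix ℝ).IsHermitian)

theorem eigenvalues_adjMatrix_top (i : V) :
    hB.eigenvalues i = Fintype.card V - 1 ∨ hB.eigenvalues i = -1 :=
  eq_card_sub_one_or_eq_neg_one_of_adjMatrix_top_mulVec
    ((WithLp.ofLp_eq_zero 2).ne.2 <| hB.eigenvectorBasis.orthonormal.ne_zero i)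
    (hB.mulVec_eigenvectorBasis i)

theorem eigenvalues_adjMatrix_top_ne_zero (hV : 2 ≤ Fintype.card V) (i : V) :
    hB.eigenvalues i ≠ 0 := by
  have hc : (2 : ℝ) ≤ Fintype.card V := by exact_mod_cast hV
  rcases eigenvalues_adjMatrix_top hB i with h | h <;> rw [h] <;> linarith

theorem sum_eigenvalues_adjMatrix_top : ∑ i, hB.eigenvalues i = 0 := by
  simpa using hB.trace_eq_sum_eigenvalues.symm.trans (trace_adjMatrix _ _)

theorem card_filter_pos_eigenvalues_adjMatrix_top (hV : 2 ≤ Fintype.card V) :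
    #{i | 0 < hB.eigenvalues i} = 1 :=
  card_filter_pos_eq_one_of_sum_eq_zero hV (eigenvalues_adjMatrix_top hB)
    (sum_eigenvalues_adjMatrix_top hB)

theorem card_filter_neg_eigenvalues_adjMatrix_top (hV : 2 ≤ Fintype.card V) :
    #{i | hB.eigenvalues i < 0} = Fintype.card V - 1 :=
  card_filter_neg_eq_card_sub_one_of_sum_eq_zero hV (eigenvalues_adjMatrix_top hB)
    (sum_eigenvalues_adjMatrix_top hB)

end SimpleGraph

theorem blockConst_eq_adjMatrix_top_kronecker (m n : ℕ) (A : Matrix (Fin n) (Fin n) ℝ) :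
    blockConst m n A = (⊤ : SimpleGraph (Fin m)).adjMatrix ℝ ⊗ₖ A := by
  ext p p'
  by_cases h : p.1 = p'.1 <;> simp [blockConst, h]

theorem stmt2_general (n m q : ℕ) (hm : 2 ≤ m)
    (A : Matrix (Fin n) (Fin n) ℝ) (hA : A.IsHermitian) (hinv : IsUnit A.det)
    (hpos : (Finset.univ.filter fun i => 0 < hA.eigenvalues i).card = q)
    (hneg : (Finset.univ.filter fun i => hA.eigenvalues i < 0).card = n - q)
    (hG : (blockConst m n A).IsHermitian) :
    (Finset.univ.filter fun p : Fin m × Fin n => 0 < hG.eigenvalues p).card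
        = q + (m - 1) * (n - q) ∧
    (Finset.univ.filter fun p : Fin m × Fin n => hG.eigenvalues p < 0).card
        = (n - q) + q * (m - 1) ∧
    (Finset.univ.filter fun p : Fin m × Fin n => hG.eigenvalues p = 0).card = 0 := by
  have hB := (⊤ : SimpleGraph (Fin m)).isHermitian_adjMatrix ℝ
  have hspec : univ.val.map hG.eigenvalues =
      univ.val.map fun p : Fin m × Fin n => hB.eigenvalues p.1 * hA.eigenvalues p.2 :=
    hG.map_eigenvalues_eq_of_charpoly_eq <| by
      rw [blockConst_eq_adjMatrix_top_kronecker]; exact hB.charpoly_kronecker hA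
  have hcard : 2 ≤ Fintype.card (Fin m) := by simpa using hm
  have hBpos := SimpleGraph.card_filter_pos_eigenvalues_adjMatrix_top hB hcard
  have hBneg := SimpleGraph.card_filter_neg_eigenvalues_adjMatrix_top hB hcard
  rw [Fintype.card_fin] at hBneg
  refine ⟨?_, ?_, ?_⟩
  · rw [card_filter_univ_eq_of_map_eq hspec, card_filter_mul_pos, hBpos, hBneg, hpos, hneg]
    ring
  · rw [card_filter_univ_eq_of_map_eq hspec (· < 0), card_filter_mul_neg, hBpos, hBneg, hpos,
      hneg]
    ring
  · rw [card_filter_univ_eq_of_map_eq hspec (· = 0), card_eq_zero, filter_eq_empty_iff]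
    exact fun p _ => mul_ne_zero (SimpleGraph.eigenvalues_adjMatrix_top_ne_zero hB hcard p.1)
      (hA.eigenvalues_ne_zero hinv p.2)

/-- if the symmetric invertible matrix `A` has signature
`(q, n-q, 0)`, then the block matrix `G` has signature
`(q + (m-1)(n-q), (n-q) + q(m-1), 0)`. -/
theorem stmt2 (n m q : ℕ) (hn : 1 ≤ n) (hm : 2 ≤ m) (hq : q ≤ n)
    (A : Matrix (Fin n) (Fin n) ℝ) (hA : A.IsHermitian) (hinv : IsUnit A.det)
    (hpos : (Finset.univ.filter fun i => 0 < hA.eigenvalues i).card = q)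
    (hneg : (Finset.univ.filter fun i => hA.eigenvalues i < 0).card = n - q)
    (hG : (blockConst m n A).IsHermitian) :
    (Finset.univ.filter fun p : Fin m × Fin n => 0 < hG.eigenvalues p).card
        = q + (m - 1) * (n - q) ∧
    (Finset.univ.filter fun p : Fin m × Fin n => hG.eigenvalues p < 0).card
        = (n - q) + q * (m - 1) ∧
    (Finset.univ.filter fun p : Fin m × Fin n => hG.eigenvalues p = 0).card = 0 :=
  stmt2_general n m q hm A hA hinv hpos hneg hG
end

section
/- Let m = 3 and suppose G₁₂, G₁₃, G₂₃ are invertible n×n matrices. Form the 3n×3n symmetric matrix G with zero diagonal blocks and blocks G_{ij} (G_{ji} = G_{ij}ᵀ). Set A = G₁₂ G₃₂⁻¹ G₃₁ where G₃₂ = G₂₃ᵀ, G₃₁ = G₁₃ᵀ. If A + Aᵀ has signature (r₊, r₋, n - r₊ - r₋), then G has signature (n + r₋, n + r₊, n - r₊ - r₋). -/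
/-
By Sylvester's law of inertia it suffices to exhibit a congruence `G ≅ diag(1, -1, -D)` with `D`
a diagonalisation of `A + Aᵀ`. Let `H = [[0, G₁₂], [G₁₂ᵀ, 0]]`, which is invertible and congruent
to `diag(1, -1)`, and `C = [G₁₃; G₂₃]`. Eliminating `C` against `H` (Schur complement) gives
`G ≅ H ⊕ (-Cᵀ H⁻¹ C)`, and `Cᵀ H⁻¹ C = T + Tᵀ` with `T = G₁₃ᵀ G₁₂⁻ᵀ G₂₃ = G₁₃ᵀ A⁻ᵀ G₁₃`.
Since `A⁻ᵀ (A + Aᵀ) A⁻¹ = A⁻ᵀ + A⁻¹`, this is `Pᵀ (A + Aᵀ) P` with `P = A⁻¹ G₁₃`.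
-/

open Matrix

/-- The symmetric `3n × 3n` block matrix with zero diagonal blocks and
off-diagonal blocks `G₁₂, G₁₃, G₂₃` (and their transposes below the diagonal). -/
def block3 (n : ℕ) (G12 G13 G23 : Matrix (Fin n) (Fin n) ℝ) :
    Matrix ((Fin n ⊕ Fin n) ⊕ Fin n) ((Fin n ⊕ Fin n) ⊕ Fin n) ℝ :=
  Matrix.fromBlocks (Matrix.fromBlocks 0 G12 G12ᵀ 0)
    (Matrix.fromRows G13 G23) (Matrix.fromCols G13ᵀ G23ᵀ) 0

open Finset QuadraticMap QuadraticForm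

namespace Matrix

variable {ι R : Type*} [Fintype ι] [DecidableEq ι] [CommRing R]

def Congruent (M N : Matrix ι ι R) : Prop :=
  ∃ P : Matrix ι ι R, IsUnit P.det ∧ M = Pᵀ * N * P

theorem Congruent.refl (M : Matrix ι ι R) : M.Congruent M :=
  ⟨1, by simp, by simp⟩

theorem Congruent.trans {M N K : Matrix ι ι R} (h₁ : M.Congruent N) (h₂ : N.Congruent K) :
    M.Congruent K := by
  obtain ⟨P, hP, rfl⟩ := h₁
  obtain ⟨Q, hQ, rfl⟩ := h₂
  exact ⟨Q * P, by rw [det_mul]; exact hQ.mul hP, by simp only [transpose_mul, Matrix.mul_assoc]⟩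

theorem Congruent.neg {M N : Matrix ι ι R} (h : M.Congruent N) : (-M).Congruent (-N) := by
  obtain ⟨P, hP, rfl⟩ := h
  exact ⟨P, hP, by rw [Matrix.mul_neg, Matrix.neg_mul]⟩

theorem Congruent.fromBlocks {κ : Type*} [Fintype κ] [DecidableEq κ]
    {M₁ N₁ : Matrix ι ι R} {M₂ N₂ : Matrix κ κ R} (h₁ : M₁.Congruent N₁) (h₂ : M₂.Congruent N₂) :
    (Matrix.fromBlocks M₁ 0 0 M₂).Congruent (Matrix.fromBlocks N₁ 0 0 N₂) := by
  obtain ⟨P, hP, rfl⟩ := h₁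
  obtain ⟨Q, hQ, rfl⟩ := h₂
  refine ⟨Matrix.fromBlocks P 0 0 Q, by rw [det_fromBlocks_zero₂₁]; exact hP.mul hQ, ?_⟩
  simp [fromBlocks_transpose, fromBlocks_multiply]

theorem Congruent.toQuadraticForm'_equivalent {M N : Matrix ι ι R} (h : M.Congruent N) :
    M.toQuadraticForm'.Equivalent N.toQuadraticForm' := by
  obtain ⟨P, hP, rfl⟩ := h
  have := P.invertibleOfIsUnitDet hP
  refine ⟨{ P.toLinearEquiv' this with map_app' := fun x => ?_ }⟩
  simp [toQuadraticForm', toLinearMap₂'_apply', ← mulVec_mulVec, dotProduct_mulVec, vecMul_transpose]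

theorem toQuadraticForm'_diagonal (d : ι → R) :
    (diagonal d).toQuadraticForm' = weightedSumSquares R d := by
  ext x
  simp [toQuadraticForm', toLinearMap₂'_apply', dotProduct, mulVec_diagonal, mul_left_comm]

theorem IsHermitian.congruent_diagonal_eigenvalues {M : Matrix ι ι ℝ} (hM : M.IsHermitian) :
    M.Congruent (diagonal hM.eigenvalues) := by
  let U : Matrix ι ι ℝ := hM.eigenvectorUnitary
  refine ⟨Uᵀ, ?_, ?_⟩
  · exact isUnit_det_transpose _ (UnitaryGroup.det_isUnit hM.eigenvectorUnitary)
  · have h := hM.spectral_theorem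
    rw [RCLike.ofReal_real_eq_id, Unitary.conjStarAlgAut_apply, star_eq_conjTranspose,
      conjTranspose_eq_transpose_of_trivial] at h
    simpa using h

-- Sylvester's law of inertia: both sides are the index `sigPos` of the form `x ↦ xᵀ M x`.
theorem IsHermitian.card_pos_eigenvalues_eq {M : Matrix ι ι ℝ} (hM : M.IsHermitian) {d : ι → ℝ}
    (h : M.Congruent (diagonal d)) : #{i | 0 < hM.eigenvalues i} = #{i | 0 < d i} := by
  have e₁ := hM.congruent_diagonal_eigenvalues.toQuadraticForm'_equivalent
  have e₂ := h.toQuadraticForm'_equivalent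
  rw [toQuadraticForm'_diagonal] at e₁ e₂
  have := (sigPos_of_equiv_weightedSumSquares e₁).symm.trans (sigPos_of_equiv_weightedSumSquares e₂)
  simpa [← Set.ncard_coe_finset] using this

theorem IsHermitian.card_neg_eigenvalues_eq {M : Matrix ι ι ℝ} (hM : M.IsHermitian) {d : ι → ℝ}
    (h : M.Congruent (diagonal d)) : #{i | hM.eigenvalues i < 0} = #{i | d i < 0} := by
  have e₁ := hM.congruent_diagonal_eigenvalues.toQuadraticForm'_equivalent
  have e₂ := h.toQuadraticForm'_equivalent
  rw [toQuadraticForm'_diagonal] at e₁ e₂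
  have := (sigNeg_of_equiv_weightedSumSquares e₁).symm.trans (sigNeg_of_equiv_weightedSumSquares e₂)
  simpa [← Set.ncard_coe_finset] using this

theorem congruent_fromBlocks_zero_transpose_zero [Invertible (2 : R)] {B : Matrix ι ι R}
    (hB : IsUnit B.det) :
    (fromBlocks 0 B Bᵀ 0).Congruent (diagonal (Sum.elim (fun _ => 1) fun _ => -1)) := by
  refine ⟨fromBlocks 1 ((⅟2 : R) • B) 1 (-((⅟2 : R) • B)), ?_, ?_⟩
  · have : -((⅟2 : R) • B) - 1 * ((⅟2 : R) • B) = -B := by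
      rw [Matrix.one_mul, ← neg_add', ← add_smul, invOf_two_add_invOf_two, one_smul]
    rw [det_fromBlocks_one₁₁, this, det_neg]
    exact ((isUnit_neg_one).pow _).mul hB
  · rw [← fromBlocks_diagonal, fromBlocks_transpose, fromBlocks_multiply, fromBlocks_multiply]
    simp [← diagonal_neg]

theorem congruent_fromBlocks_schur {κ : Type*} [Fintype κ] [DecidableEq κ]
    {M : Matrix ι ι R} (hM : Mᵀ = M) (hdet : IsUnit M.det) (C : Matrix ι κ R) (D : Matrix κ κ R) :
    (fromBlocks M C Cᵀ D).Congruent (fromBlocks M 0 0 (D - Cᵀ * M⁻¹ * C)) := by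
  refine ⟨fromBlocks 1 (M⁻¹ * C) 0 1, by simp, ?_⟩
  simp [fromBlocks_transpose, fromBlocks_multiply, transpose_nonsing_inv, hM, hdet, Matrix.mul_assoc]

theorem fromBlocks_zero_inv_transpose_zero_mul {B : Matrix ι ι R} (hB : IsUnit B.det) :
    fromBlocks 0 (Bᵀ)⁻¹ B⁻¹ 0 * fromBlocks 0 B Bᵀ 0 = 1 := by
  simp [fromBlocks_multiply, hB]

theorem transpose_inv_mul_add_transpose_mul_inv {A : Matrix ι ι R} (hA : IsUnit A.det) :
    (A⁻¹)ᵀ * (A + Aᵀ) * A⁻¹ = (A⁻¹)ᵀ + A⁻¹ := by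
  rw [Matrix.mul_add, Matrix.add_mul, mul_nonsing_inv_cancel_right _ _ hA, ← transpose_mul,
    mul_nonsing_inv _ hA, transpose_one, Matrix.one_mul]

theorem congruent_transpose_fromRows_mul_inv_mul_fromRows {G12 G13 G23 A : Matrix ι ι R}
    (h12 : IsUnit G12.det) (h13 : IsUnit G13.det) (h23 : IsUnit G23.det)
    (hA : A = G12 * (G23ᵀ)⁻¹ * G13ᵀ) :
    ((fromRows G13 G23)ᵀ * (fromBlocks 0 G12 G12ᵀ 0)⁻¹ * fromRows G13 G23).Congruent
      (A + Aᵀ) := by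
  have hAdet : IsUnit A.det := by
    simpa [hA, det_mul, isUnit_nonsing_inv_det_iff] using ⟨⟨h12, h23⟩, h13⟩
  have hT : G13ᵀ * A⁻¹ * G13 = G23ᵀ * G12⁻¹ * G13 := by
    rw [hA, mul_inv_rev, mul_inv_rev, nonsing_inv_nonsing_inv _ (isUnit_det_transpose _ h23),
      mul_nonsing_inv_cancel_left _ _ (isUnit_det_transpose _ h13)]
  refine ⟨A⁻¹ * G13, by simpa [det_mul, isUnit_nonsing_inv_det_iff] using ⟨hAdet, h13⟩, ?_⟩
  rw [inv_eq_left_inv (fromBlocks_zero_inv_transpose_zero_mul h12), transpose_fromRows,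
    fromCols_mul_fromBlocks, fromCols_mul_fromRows]
  calc _ = (G13ᵀ * A⁻¹ * G13)ᵀ + G13ᵀ * A⁻¹ * G13 := by
        simp [hT, transpose_nonsing_inv, Matrix.mul_assoc, add_comm]
    _ = G13ᵀ * ((A⁻¹)ᵀ + A⁻¹) * G13 := by
        simp [Matrix.mul_add, Matrix.add_mul, Matrix.mul_assoc]
    _ = _ := by
        rw [← transpose_inv_mul_add_transpose_mul_inv hAdet, transpose_mul]
        simp only [Matrix.mul_assoc]

end Matrix

theorem block3_congruent {n : ℕ} {G12 G13 G23 A : Matrix (Fin n) (Fin n) ℝ}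
    (h12 : IsUnit G12.det) (h13 : IsUnit G13.det) (h23 : IsUnit G23.det)
    (hA : A = G12 * (G23ᵀ)⁻¹ * G13ᵀ) :
    (block3 n G12 G13 G23).Congruent (fromBlocks (fromBlocks 0 G12 G12ᵀ 0) 0 0 (-(A + Aᵀ))) := by
  have hH : (fromBlocks 0 G12 G12ᵀ 0)ᵀ = fromBlocks 0 G12 G12ᵀ 0 := by simp [fromBlocks_transpose]
  have hHdet : IsUnit (fromBlocks 0 G12 G12ᵀ 0).det :=
    isUnit_det_of_left_inverse (fromBlocks_zero_inv_transpose_zero_mul h12)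
  have hG : block3 n G12 G13 G23 =
      fromBlocks (fromBlocks 0 G12 G12ᵀ 0) (fromRows G13 G23) (fromRows G13 G23)ᵀ 0 := by
    rw [block3, transpose_fromRows]
  rw [hG]
  refine (congruent_fromBlocks_schur hH hHdet _ _).trans (.fromBlocks (.refl _) ?_)
  rw [zero_sub]
  exact (congruent_transpose_fromRows_mul_inv_mul_fromRows h12 h13 h23 hA).neg

theorem Finset.card_pos_add_card_neg_add_card_zero {ι α : Type*} [Fintype ι] [LinearOrder α]
    [Zero α] (f : ι → α) :
    #{i | 0 < f i} + #{i | f i < 0} + #{i | f i = 0} = Fintype.card ι := by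
  rw [card_filter, card_filter, card_filter, ← sum_add_distrib, ← sum_add_distrib,
    Fintype.card_eq_sum_ones]
  refine sum_congr rfl fun i _ => ?_
  rcases lt_trichotomy (f i) 0 with h | h | h
  · simp [h, h.ne, not_lt.2 h.le]
  · simp [h]
  · simp [h, h.ne', not_lt.2 h.le]

/-- with `G₁₂, G₁₃, G₂₃` invertible and
`A = G₁₂ G₃₂⁻¹ G₃₁` (`G₃₂ = G₂₃ᵀ`, `G₃₁ = G₁₃ᵀ`), if `A + Aᵀ` has signature
`(rp, rm, n - rp - rm)` then `G` has signature `(n + rm, n + rp, n - rp - rm)`. -/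
theorem stmt6 (n rp rm : ℕ) (G12 G13 G23 : Matrix (Fin n) (Fin n) ℝ)
    (h12 : IsUnit G12.det) (h13 : IsUnit G13.det) (h23 : IsUnit G23.det)
    (A : Matrix (Fin n) (Fin n) ℝ) (hAdef : A = G12 * (G23ᵀ)⁻¹ * G13ᵀ)
    (hS : (A + Aᵀ).IsHermitian)
    (hrp : (Finset.univ.filter fun i => 0 < hS.eigenvalues i).card = rp)
    (hrm : (Finset.univ.filter fun i => hS.eigenvalues i < 0).card = rm)
    (hG : (block3 n G12 G13 G23).IsHermitian) :
    (Finset.univ.filter fun i : (Fin n ⊕ Fin n) ⊕ Fin n =>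
        0 < hG.eigenvalues i).card = n + rm ∧
    (Finset.univ.filter fun i : (Fin n ⊕ Fin n) ⊕ Fin n =>
        hG.eigenvalues i < 0).card = n + rp ∧
    (Finset.univ.filter fun i : (Fin n ⊕ Fin n) ⊕ Fin n =>
        hG.eigenvalues i = 0).card = n - rp - rm := by
  have hcong : (block3 n G12 G13 G23).Congruent
      (diagonal (Sum.elim (Sum.elim (fun _ => 1) fun _ => -1) fun i => -hS.eigenvalues i)) := by
    rw [← fromBlocks_diagonal, ← diagonal_neg]
    exact (block3_congruent h12 h13 h23 hAdef).trans
      (.fromBlocks (congruent_fromBlocks_zero_transpose_zero h12)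
        hS.congruent_diagonal_eigenvalues.neg)
  have hpos : #{i | 0 < hG.eigenvalues i} = n + rm := by
    rw [hG.card_pos_eigenvalues_eq hcong, card_filter, Fintype.sum_sum_type,
      Fintype.sum_sum_type, ← hrm, card_filter]
    norm_num
  have hneg : #{i | hG.eigenvalues i < 0} = n + rp := by
    rw [hG.card_neg_eigenvalues_eq hcong, card_filter, Fintype.sum_sum_type,
      Fintype.sum_sum_type, ← hrp, card_filter]
    norm_num
  have hG3 := card_pos_add_card_neg_add_card_zero hG.eigenvalues
  have hS3 := card_pos_add_card_neg_add_card_zero hS.eigenvalues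
  simp only [Fintype.card_sum, Fintype.card_fin] at hG3 hS3
  omega
end

section
/- Let G be an mn×mn symmetric block matrix with zero diagonal blocks, and suppose for some i ≠ j the block G_{ij} has rank r. Then G has at least r positive eigenvalues and at least r negative eigenvalues. -/
/-!
For `v` in a complement `S` of `ker G_{ij}`, so that `dim S = r`, let `x` have block `i` equal to
`ε G_{ij} v`, block `j` equal to `v` and all other blocks zero. Since the diagonal blocks vanish,
`xᵀ G x = 2 ε ‖G_{ij} v‖²`, so for `ε = 1` (resp. `ε = -1`) the quadratic form of `G` is positive
(resp. negative) definite on an `r`-dimensional subspace. In eigencoordinates the form is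
`∑ λ_k y_k²`, hence on such a subspace the projection onto the coordinates with `λ_k > 0`
(resp. `λ_k < 0`) is injective, and there are at least `r` of them.
-/

open Matrix

open Finset in
theorem finrank_le_card_pos_of_sum_mul_sq_pos {ι E : Type*} [Fintype ι] [AddCommGroup E]
    [Module ℝ E] (d : ι → ℝ) (L : E →ₗ[ℝ] ι → ℝ)
    (hpos : ∀ v, v ≠ 0 → 0 < ∑ k, d k * L v k ^ 2) :
    Module.finrank ℝ E ≤ #{k | 0 < d k} := by
  let restrict : E →ₗ[ℝ] {k // 0 < d k} → ℝ := LinearMap.funLeft ℝ ℝ Subtype.val ∘ₗ L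
  have hinj : Function.Injective restrict := by
    rw [← LinearMap.ker_eq_bot, LinearMap.ker_eq_bot']
    intro v hv
    by_contra hv0
    have hle : ∑ k, d k * L v k ^ 2 ≤ 0 := by
      refine sum_nonpos fun k _ => ?_
      by_cases hk : 0 < d k
      · have hLvk : L v k = 0 := congrFun hv ⟨k, hk⟩
        simp [hLvk]
      · exact mul_nonpos_of_nonpos_of_nonneg (not_lt.1 hk) (sq_nonneg _)
    exact (hpos v hv0).not_ge hle
  simpa [Fintype.card_subtype] using LinearMap.finrank_le_finrank_of_injective hinj

namespace Matrix.IsHermitian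

open Finset

variable {n : Type*} [Fintype n] [DecidableEq n] {A : Matrix n n ℝ}

theorem dotProduct_mulVec_eq_sum_eigenvalues_mul_sq (hA : A.IsHermitian) (x : n → ℝ) :
    x ⬝ᵥ A *ᵥ x =
      ∑ k, hA.eigenvalues k * ((hA.eigenvectorUnitary : Matrix n n ℝ)ᵀ *ᵥ x) k ^ 2 := by
  set U : Matrix n n ℝ := (hA.eigenvectorUnitary : Matrix n n ℝ)
  have hU : A = U * diagonal hA.eigenvalues * Uᵀ := by
    conv_lhs => rw [hA.spectral_theorem, Unitary.conjStarAlgAut_apply]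
    rfl
  conv_lhs => rw [hU]
  have hxU : x ᵥ* U = Uᵀ *ᵥ x := by rw [← vecMul_transpose, transpose_transpose]
  rw [← mulVec_mulVec, ← mulVec_mulVec, dotProduct_mulVec, hxU]
  simp only [dotProduct, mulVec_diagonal]
  exact sum_congr rfl fun k _ => by ring

variable {E : Type*} [AddCommGroup E] [Module ℝ E]

theorem finrank_le_card_eigenvalues_pos (hA : A.IsHermitian) (Φ : E →ₗ[ℝ] n → ℝ)
    (hpos : ∀ v, v ≠ 0 → 0 < Φ v ⬝ᵥ A *ᵥ Φ v) :
    Module.finrank ℝ E ≤ #{k | 0 < hA.eigenvalues k} :=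
  finrank_le_card_pos_of_sum_mul_sq_pos _ ((hA.eigenvectorUnitary : Matrix n n ℝ)ᵀ.mulVecLin ∘ₗ Φ)
    fun v hv => by
      rw [LinearMap.comp_apply, mulVecLin_apply, ← hA.dotProduct_mulVec_eq_sum_eigenvalues_mul_sq]
      exact hpos v hv

theorem finrank_le_card_eigenvalues_neg (hA : A.IsHermitian) (Φ : E →ₗ[ℝ] n → ℝ)
    (hneg : ∀ v, v ≠ 0 → Φ v ⬝ᵥ A *ᵥ Φ v < 0) :
    Module.finrank ℝ E ≤ #{k | hA.eigenvalues k < 0} := by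
  have := finrank_le_card_pos_of_sum_mul_sq_pos (-hA.eigenvalues)
    ((hA.eigenvectorUnitary : Matrix n n ℝ)ᵀ.mulVecLin ∘ₗ Φ) fun v hv => by
      simp only [Pi.neg_apply, neg_mul, sum_neg_distrib, LinearMap.comp_apply, mulVecLin_apply,
        ← hA.dotProduct_mulVec_eq_sum_eigenvalues_mul_sq, neg_pos]
      exact hneg v hv
  simpa using this

end Matrix.IsHermitian

namespace Matrix

theorem exists_submodule_finrank_eq_rank_mulVec_ne_zero {K m n : Type*} [Field K]
    [Fintype n] (B : Matrix m n K) :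
    ∃ S : Submodule K (n → K), Module.finrank K S = B.rank ∧ ∀ v ∈ S, v ≠ 0 → B *ᵥ v ≠ 0 := by
  obtain ⟨S, hS⟩ := (LinearMap.ker B.mulVecLin).exists_isCompl
  refine ⟨S, ?_, fun v hvS hv hBv => hv ?_⟩
  · have := LinearMap.finrank_range_add_finrank_ker B.mulVecLin
    have := Submodule.finrank_add_eq_of_isCompl hS
    rw [rank]
    omega
  · exact (Submodule.disjoint_def.1 hS.disjoint) v hBv hvS

variable {R ι κ : Type*} [DecidableEq ι]

def blockSingle [Semiring R] (i : ι) : (κ → R) →ₗ[R] ι × κ → R :=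
  (LinearEquiv.curry R R ι κ).symm.toLinearMap ∘ₗ LinearMap.single R (fun _ => κ → R) i

@[simp]
theorem blockSingle_apply [Semiring R] (i : ι) (w : κ → R) (p : ι × κ) :
    blockSingle i w p = if p.1 = i then w p.2 else 0 := by
  obtain ⟨a, b⟩ := p
  simp [blockSingle, Pi.single_apply, ite_apply]

variable [Fintype ι] [Fintype κ]

theorem blockSingle_dotProduct_mulVec_blockSingle [CommSemiring R]
    (G : Matrix (ι × κ) (ι × κ) R) (k l : ι) (w z : κ → R) :
    blockSingle k w ⬝ᵥ G *ᵥ blockSingle l z = w ⬝ᵥ G.submatrix (k, ·) (l, ·) *ᵥ z := by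
  simp [dotProduct, mulVec, Fintype.sum_prod_type]

theorem blockSingle_add_blockSingle_dotProduct_mulVec [CommRing R]
    {G : Matrix (ι × κ) (ι × κ) R} (hG : G.IsSymm)
    (hdiag : ∀ p q : ι × κ, p.1 = q.1 → G p q = 0) (i j : ι) (a b : κ → R) :
    (blockSingle i a + blockSingle j b) ⬝ᵥ G *ᵥ (blockSingle i a + blockSingle j b) =
      2 * (a ⬝ᵥ G.submatrix (i, ·) (j, ·) *ᵥ b) := by
  have hzero : ∀ k, G.submatrix (k, ·) (k, ·) = 0 := fun k => by
    ext a b; exact hdiag (k, a) (k, b) rfl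
  have hji : G.submatrix (j, ·) (i, ·) = (G.submatrix (i, ·) (j, ·))ᵀ := by
    ext a b; exact congrFun (congrFun hG (j, a)) (i, b) |>.symm
  simp only [mulVec_add, dotProduct_add, add_dotProduct,
    blockSingle_dotProduct_mulVec_blockSingle, hzero, hji, zero_mulVec, dotProduct_zero,
    dotProduct_mulVec b, vecMul_transpose, dotProduct_comm _ a]
  ring

end Matrix

theorem stmt10_general (m n r : ℕ)
    (G : Matrix (Fin m × Fin n) (Fin m × Fin n) ℝ)
    (hdiag : ∀ p q : Fin m × Fin n, p.1 = q.1 → G p q = 0)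
    (hG : G.IsHermitian)
    (i j : Fin m)
    (B : Matrix (Fin n) (Fin n) ℝ)
    (hB : ∀ a b : Fin n, B a b = G (i, a) (j, b))
    (hr : B.rank = r) :
    r ≤ (Finset.univ.filter fun p : Fin m × Fin n =>
          0 < hG.eigenvalues p).card ∧
    r ≤ (Finset.univ.filter fun p : Fin m × Fin n =>
          hG.eigenvalues p < 0).card := by
  have hGij : G.submatrix (i, ·) (j, ·) = B := by ext a b; exact (hB a b).symm
  obtain ⟨S, hSr, hBS⟩ := B.exists_submodule_finrank_eq_rank_mulVec_ne_zero
  let Φ (ε : ℝ) : S →ₗ[ℝ] Fin m × Fin n → ℝ :=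
    blockSingle i ∘ₗ (ε • B.mulVecLin) ∘ₗ S.subtype + blockSingle j ∘ₗ S.subtype
  have hΦ (ε : ℝ) (v : S) : Φ ε v ⬝ᵥ G *ᵥ Φ ε v = 2 * ε * (B *ᵥ v ⬝ᵥ B *ᵥ v) := by
    simp only [Φ, LinearMap.add_apply, LinearMap.comp_apply, LinearMap.smul_apply,
      mulVecLin_apply, Submodule.subtype_apply,
      blockSingle_add_blockSingle_dotProduct_mulVec (isHermitian_iff_isSymm.1 hG) hdiag, hGij,
      smul_dotProduct, smul_eq_mul]
    ring
  have hBv (v : S) (hv : v ≠ 0) : 0 < B *ᵥ v ⬝ᵥ B *ᵥ v := by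
    simpa using dotProduct_star_self_pos_iff.2 (hBS v v.2 (by simpa using hv))
  rw [← hr, ← hSr]
  exact ⟨hG.finrank_le_card_eigenvalues_pos (Φ 1) fun v hv => by linarith [hΦ 1 v, hBv v hv],
    hG.finrank_le_card_eigenvalues_neg (Φ (-1)) fun v hv => by linarith [hΦ (-1) v, hBv v hv]⟩

/-- if a symmetric `mn × mn` block matrix with zero diagonal
blocks has an off-diagonal block of rank `r`, then it has at least `r` positive
and at least `r` negative eigenvalues. -/
theorem stmt10 (m n r : ℕ)
    (G : Matrix (Fin m × Fin n) (Fin m × Fin n) ℝ)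
    (hdiag : ∀ p q : Fin m × Fin n, p.1 = q.1 → G p q = 0)
    (hG : G.IsHermitian)
    (i j : Fin m) (hij : i ≠ j)
    (B : Matrix (Fin n) (Fin n) ℝ)
    (hB : ∀ a b : Fin n, B a b = G (i, a) (j, b))
    (hr : B.rank = r) :
    r ≤ (Finset.univ.filter fun p : Fin m × Fin n =>
          0 < hG.eigenvalues p).card ∧
    r ≤ (Finset.univ.filter fun p : Fin m × Fin n =>
          hG.eigenvalues p < 0).card :=
  stmt10_general m n r G hdiag hG i j B hB hr
end

section
/- Let c : ℝ^m → ℝ be C² with ∂²c/∂x_i∂x_j < 0 everywhere for all i ≠ j. If a set S ⊆ ℝ^m is c-monotone with respect to every partition of {1,...,m} into two nonempty sets, then for all x, y ∈ S and all i, (x₁ - y₁)(x_i - y_i) ≥ 0; i.e., the projection of S onto the (x₁, x_i)-plane is a monotone nondecreasing subset of ℝ². -/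
/-!
Write `a = x ⊓ y`, `u = x - a`, `v = y - a`, so that `x = a + u`, `y = a + v` and
`x ⊔ y = a + u + v`. If `x` and `y` cross, i.e. `y₁ < x₁` and `x_i < y_i`, then `u, v ≥ 0`
have disjoint supports with `u₁ > 0` and `v_i > 0`, so the negative off-diagonal Hessian gives
`D²c(w)(u, v) < 0` everywhere. Applying the mean value theorem twice,
`c(a + u + v) + c(a) < c(a + u) + c(a + v)`, i.e. `c(x ⊔ y) + c(x ⊓ y) < c(x) + c(y)`.
This contradicts `c`-monotonicity for the partition `p₊ = {j | y_j ≤ x_j}`, which swaps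
`x, y` into `x ⊔ y, x ⊓ y`.
-/

open Finset

section Calculus

variable {E : Type*} [NormedAddCommGroup E] [NormedSpace ℝ E]

theorem Differentiable.apply_add_lt_of_fderiv_neg {g : E → ℝ} (hg : Differentiable ℝ g)
    {u : E} (hneg : ∀ w, fderiv ℝ g w u < 0) (b : E) : g (b + u) < g b := by
  have hline : ∀ t : ℝ, HasDerivAt (fun t => g (b + t • u)) (fderiv ℝ g (b + t • u) u) t :=
    fun t => (hg _).hasFDerivAt.comp_hasDerivAt t
      (((hasDerivAt_id t).smul_const u).const_add b |>.congr_deriv (one_smul ℝ u))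
  simpa using strictAnti_of_hasDerivAt_neg hline (fun t => hneg _) zero_lt_one

theorem add_add_lt_add_of_fderiv_fderiv_neg {f : E → ℝ} (hf : Differentiable ℝ f)
    (hf' : Differentiable ℝ (fderiv ℝ f)) {u v : E}
    (hneg : ∀ w, fderiv ℝ (fderiv ℝ f) w u v < 0) (a : E) :
    f (a + u + v) + f a < f (a + u) + f (a + v) := by
  have hdv : ∀ w, fderiv ℝ f (w + u) v < fderiv ℝ f w v := by
    refine (hf'.clm_apply (differentiable_const v)).apply_add_lt_of_fderiv_neg (fun w => ?_)
    rw [((hf' w).hasFDerivAt.clm_apply (hasFDerivAt_const v w)).fderiv]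
    simpa using hneg w
  have hdiff : ∀ w, HasFDerivAt (fun w => f (w + u) - f w)
      (fderiv ℝ f (w + u) - fderiv ℝ f w) w := fun w =>
    ((hf _).hasFDerivAt.comp w ((hasFDerivAt_id w).add_const u)).sub (hf w).hasFDerivAt
  have key := Differentiable.apply_add_lt_of_fderiv_neg (fun w => (hdiff w).differentiableAt)
    (u := v) (fun w => by simpa [(hdiff w).fderiv] using hdv w) a
  rw [add_right_comm] at key
  linarith

end Calculus

namespace ContinuousLinearMap

variable {ι : Type*} [Fintype ι] [DecidableEq ι]

theorem apply_apply_eq_sum_single (H : (ι → ℝ) →L[ℝ] (ι → ℝ) →L[ℝ] ℝ) (d e : ι → ℝ) :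
    H d e = ∑ j, ∑ k, d j * e k * H (Pi.single j 1) (Pi.single k 1) := by
  conv_lhs => rw [pi_eq_sum_univ' d, pi_eq_sum_univ' e]
  simp only [map_sum, map_smul, _root_.sum_apply, FunLike.coe_smul, Pi.smul_apply, smul_eq_mul,
    mul_sum]
  rw [sum_comm]
  simp only [mul_assoc, mul_left_comm (e _)]

theorem apply_apply_neg_of_offDiag_neg (H : (ι → ℝ) →L[ℝ] (ι → ℝ) →L[ℝ] ℝ)
    (hH : ∀ j k, j ≠ k → H (Pi.single j 1) (Pi.single k 1) < 0) {d e : ι → ℝ}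
    (hd : 0 ≤ d) (he : 0 ≤ e) (hde : ∀ j, d j = 0 ∨ e j = 0) {i k : ι}
    (hi : 0 < d i) (hk : 0 < e k) : H d e < 0 := by
  have hik : i ≠ k := by
    rintro rfl
    rcases hde i with h | h <;> linarith
  have hterm : ∀ j l, d j * e l * H (Pi.single j 1) (Pi.single l 1) ≤ 0 := by
    intro j l
    obtain rfl | hjl := eq_or_ne j l
    · rcases hde j with h | h <;> simp [h]
    · exact mul_nonpos_of_nonneg_of_nonpos (mul_nonneg (hd j) (he l)) (hH j l hjl).le
  rw [apply_apply_eq_sum_single]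
  refine sum_neg' (fun j _ => sum_nonpos fun l _ => hterm j l) ⟨i, mem_univ i, ?_⟩
  exact sum_neg' (fun l _ => hterm i l)
    ⟨k, mem_univ k, mul_neg_of_pos_of_neg (mul_pos hi hk) (hH i k hik)⟩

end ContinuousLinearMap

theorem sup_add_inf_lt_add_of_offDiag_neg {ι : Type*} [Fintype ι] [DecidableEq ι]
    {c : (ι → ℝ) → ℝ} (hc : ContDiff ℝ 2 c)
    (hmix : ∀ i j : ι, i ≠ j → ∀ x : ι → ℝ,
      iteratedFDeriv ℝ 2 c x ![Pi.single i 1, Pi.single j 1] < 0)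
    {x y : ι → ℝ} {i k : ι} (hi : y i < x i) (hk : x k < y k) :
    c (x ⊔ y) + c (x ⊓ y) < c x + c y := by
  set a := x ⊓ y
  have hsup : x ⊔ y = a + (x - a) + (y - a) := by
    ext j
    simp only [Pi.add_apply, Pi.sub_apply, Pi.sup_apply, a, Pi.inf_apply]
    linarith [min_add_max (x j) (y j)]
  have hneg : ∀ w, fderiv ℝ (fderiv ℝ c) w (x - a) (y - a) < 0 := fun w =>
    ContinuousLinearMap.apply_apply_neg_of_offDiag_neg _
      (fun j l hjl => by simpa [iteratedFDeriv_two_apply] using hmix j l hjl w)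
      (sub_nonneg.2 inf_le_left) (sub_nonneg.2 inf_le_right)
      (fun j => by rcases le_total (x j) (y j) with h | h <;> simp [a, h])
      (i := i) (k := k) (by simp [a, hi]) (by simp [a, hk])
  have key := add_add_lt_add_of_fderiv_fderiv_neg (hc.differentiable (by norm_num))
    ((hc.fderiv_right (m := 1) (by norm_num)).differentiable (by norm_num)) hneg a
  rwa [← hsup, add_sub_cancel, add_sub_cancel] at key

theorem add_le_sup_add_inf_of_swap_le {ι : Type*} [Fintype ι] [DecidableEq ι]
    {c : (ι → ℝ) → ℝ} {S : Set (ι → ℝ)}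
    (hmono : ∀ p : Finset ι, p.Nonempty → p ≠ univ →
      ∀ x ∈ S, ∀ y ∈ S,
        c x + c y ≤ c (fun i => if i ∈ p then x i else y i)
          + c (fun i => if i ∈ p then y i else x i))
    {x y : ι → ℝ} (hx : x ∈ S) (hy : y ∈ S) {j k : ι} (hj : y j ≤ x j) (hk : x k < y k) :
    c x + c y ≤ c (x ⊔ y) + c (x ⊓ y) := by
  let p := univ.filter fun l => y l ≤ x l
  have hp : p ≠ univ := fun h => by
    have := h ▸ mem_univ k
    simp only [p, mem_filter, mem_univ, true_and] at this
    linarith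
  have hsup : (fun l => if l ∈ p then x l else y l) = x ⊔ y := by
    ext l
    by_cases h : y l ≤ x l <;> simp [p, h, le_of_not_ge]
  have hinf : (fun l => if l ∈ p then y l else x l) = x ⊓ y := by
    ext l
    by_cases h : y l ≤ x l <;> simp [p, h, le_of_not_ge]
  simpa only [hsup, hinf] using hmono p ⟨j, by simp [p, hj]⟩ hp x hx y hy

/-- if `c : ℝ^m → ℝ` is `C²` with all mixed partials
`∂²c/∂x_i∂x_j < 0` (`i ≠ j`) and `S` is `c`-monotone with respect to every
partition of `{1,…,m}` into two nonempty parts, then for all `x, y ∈ S` and all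
`i`, `(x₁ - y₁)(x_i - y_i) ≥ 0`. -/
theorem stmt11 (m : ℕ) (hm : 2 ≤ m) (c : (Fin m → ℝ) → ℝ)
    (hc : ContDiff ℝ 2 c)
    (hmix : ∀ i j : Fin m, i ≠ j → ∀ x : Fin m → ℝ,
      iteratedFDeriv ℝ 2 c x ![Pi.single i 1, Pi.single j 1] < 0)
    (S : Set (Fin m → ℝ))
    (hmono : ∀ p : Finset (Fin m), p.Nonempty → p ≠ Finset.univ →
      ∀ x ∈ S, ∀ y ∈ S,
        c x + c y ≤ c (fun i => if i ∈ p then x i else y i)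
          + c (fun i => if i ∈ p then y i else x i)) :
    ∀ x ∈ S, ∀ y ∈ S, ∀ i : Fin m,
      0 ≤ (x ⟨0, by omega⟩ - y ⟨0, by omega⟩) * (x i - y i) := by
  have no_crossing : ∀ x ∈ S, ∀ y ∈ S, ∀ j k, y j < x j → x k < y k → False :=
    fun x hx y hy j k hj hk => (sup_add_inf_lt_add_of_offDiag_neg hc hmix hj hk).not_ge
      (add_le_sup_add_inf_of_swap_le hmono hx hy hj.le hk)
  intro x hx y hy i
  by_contra! hcross
  rcases mul_neg_iff.1 hcross with ⟨h0, hi⟩ | ⟨h0, hi⟩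
  · exact no_crossing x hx y hy ⟨0, by omega⟩ i (by linarith) (by linarith)
  · exact no_crossing y hy x hx ⟨0, by omega⟩ i (by linarith) (by linarith)
end

section
/- Suppose γ minimizes ∫ c dγ over probability measures on M₁ × ... × M_m with fixed marginals μ₁,...,μ_m, with c continuous and C(γ) < ∞. Then for every partition (p₊, p₋) of {1,...,m}, the support of γ is c-monotone with respect to (p₊, p₋): for all y, ỹ ∈ spt(γ), c(y) + c(ỹ) ≤ c(z) + c(z̃), where z, z̃ are the coordinate swaps of y, ỹ along the partition. -/
/-!
Suppose `c y + c ỹ > c z + c z̃` for two points `y, ỹ` of the support. By continuity the strict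
inequality persists on a product `U × V` of small disjoint open neighbourhoods, on which both
swapped costs also stay bounded, hence integrable. Let `σ = γ|_U ⊗ γ|_V`. Its two marginals add up
to `γ(V) γ|_U + γ(U) γ|_V ≤ γ`; replace this part of `γ` by the images of `σ` under the two
coordinate swaps along `(p₊, p₋)`. Every one-dimensional marginal is unchanged, because each
coordinate of the swapped pair is a coordinate of the original pair, while the cost drops by
`∫ (c u + c v - c(swap) - c(swap')) dσ > 0`. This contradicts optimality of `γ`.
-/

open MeasureTheory Filter Topology Set

section Piecewise

variable {ι Y : Type*} {X : ι → Type*} (s : Finset ι) [∀ j, Decidable (j ∈ s)]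

theorem Continuous.finset_piecewise [∀ i, TopologicalSpace (X i)] [TopologicalSpace Y]
    {f g : Y → ∀ i, X i} (hf : Continuous f) (hg : Continuous g) :
    Continuous fun y => s.piecewise (f y) (g y) :=
  continuous_pi fun i => by
    by_cases hi : i ∈ s
    · simp only [Finset.piecewise_eq_of_mem _ _ _ hi]; exact (continuous_apply i).comp hf
    · simp only [Finset.piecewise_eq_of_notMem _ _ _ hi]; exact (continuous_apply i).comp hg

theorem Measurable.finset_piecewise [∀ i, MeasurableSpace (X i)] [MeasurableSpace Y]
    {f g : Y → ∀ i, X i} (hf : Measurable f) (hg : Measurable g) :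
    Measurable fun y => s.piecewise (f y) (g y) :=
  measurable_pi_lambda _ fun i => by
    by_cases hi : i ∈ s
    · simp only [Finset.piecewise_eq_of_mem _ _ _ hi]; exact (measurable_pi_apply i).comp hf
    · simp only [Finset.piecewise_eq_of_notMem _ _ _ hi]; exact (measurable_pi_apply i).comp hg

end Piecewise

theorem exists_disjoint_isOpen_prod_subset {X : Type*} [TopologicalSpace X] [T2Space X]
    {x y : X} (hxy : x ≠ y) {W : Set (X × X)} (hW : W ∈ 𝓝 (x, y)) :
    ∃ U V : Set X, IsOpen U ∧ IsOpen V ∧ x ∈ U ∧ y ∈ V ∧ Disjoint U V ∧ U ×ˢ V ⊆ W := by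
  obtain ⟨U₀, V₀, hU₀, hV₀, hxU₀, hyV₀, hUV₀⟩ := t2_separation hxy
  obtain ⟨U₁, V₁, hU₁, hxU₁, hV₁, hyV₁, hW₁⟩ := mem_nhds_prod_iff'.1 hW
  exact ⟨U₀ ∩ U₁, V₀ ∩ V₁, hU₀.inter hU₁, hV₀.inter hV₁, ⟨hxU₀, hxU₁⟩, ⟨hyV₀, hyV₁⟩,
    hUV₀.mono inter_subset_left inter_subset_left,
    (prod_mono inter_subset_right inter_subset_right).trans hW₁⟩

namespace MeasureTheory

section Replacement

variable {α β : Type*} [MeasurableSpace α] {γ ν ν' : Measure α} [IsFiniteMeasure ν]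

theorem Measure.map_sub_add_of_map_eq [MeasurableSpace β] (hle : ν ≤ γ) {f : α → β}
    (hf : Measurable f) (h : ν.map f = ν'.map f) : (γ - ν + ν').map f = γ.map f := by
  rw [Measure.map_add _ _ hf, ← h, ← Measure.map_add _ _ hf, Measure.sub_add_cancel_of_le hle]

theorem Measure.isProbabilityMeasure_sub_add [IsProbabilityMeasure γ] (hle : ν ≤ γ)
    (h : ν univ = ν' univ) : IsProbabilityMeasure (γ - ν + ν') :=
  ⟨by rw [Measure.add_apply, ← h, ← Measure.add_apply, Measure.sub_add_cancel_of_le hle,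
    measure_univ]⟩

theorem integral_sub_add_of_le {f : α → ℝ} (hle : ν ≤ γ) (hγ : Integrable f γ)
    (hν' : Integrable f ν') :
    ∫ x, f x ∂(γ - ν + ν') = ∫ x, f x ∂γ - ∫ x, f x ∂ν + ∫ x, f x ∂ν' := by
  have hsub : Integrable f (γ - ν) := hγ.mono_measure Measure.sub_le
  conv_rhs => rw [← Measure.sub_add_cancel_of_le hle,
    integral_add_measure hsub (hγ.mono_measure hle)]
  rw [integral_add_measure hsub hν']
  ring

end Replacement

theorem integral_map_add_map {Z Y : Type*} [MeasurableSpace Z] [MeasurableSpace Y]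
    {σ : Measure Z} {f g : Z → Y} {c : Y → ℝ} (hf : Measurable f) (hg : Measurable g)
    (hc : Measurable c) (hcf : Integrable (c ∘ f) σ) (hcg : Integrable (c ∘ g) σ) :
    ∫ y, c y ∂(σ.map f + σ.map g) = ∫ z, (c (f z) + c (g z)) ∂σ := by
  rw [integral_add_measure ((integrable_map_measure hc.aestronglyMeasurable hf.aemeasurable).2 hcf)
    ((integrable_map_measure hc.aestronglyMeasurable hg.aemeasurable).2 hcg),
    integral_map hf.aemeasurable hc.aestronglyMeasurable,
    integral_map hg.aemeasurable hc.aestronglyMeasurable]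
  exact (integral_add hcf hcg).symm

theorem integral_pos_of_ae_pos {α : Type*} [MeasurableSpace α] {μ : Measure α} [NeZero μ]
    {f : α → ℝ} (hf : ∀ᵐ x ∂μ, 0 < f x) (hfi : Integrable f μ) : 0 < ∫ x, f x ∂μ := by
  rw [integral_pos_iff_support_of_nonneg_ae (hf.mono fun _ h => h.le) hfi]
  refine pos_iff_ne_zero.2 fun h => ?_
  obtain ⟨x, hx, hx'⟩ := (hf.and (measure_eq_zero_iff_ae_notMem.1 h)).exists
  exact hx' hx.ne'

theorem Measure.map_fst_add_map_snd_restrict_prod_le {α : Type*} [MeasurableSpace α]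
    {γ : Measure α} [IsZeroOrProbabilityMeasure γ] {U V : Set α} (hUV : Disjoint U V)
    (hV : MeasurableSet V) :
    ((γ.restrict U).prod (γ.restrict V)).map Prod.fst +
      ((γ.restrict U).prod (γ.restrict V)).map Prod.snd ≤ γ := by
  have smul_le {r : ENNReal} (hr : r ≤ 1) (μ : Measure α) : r • μ ≤ μ :=
    Measure.le_iff'.2 fun t => mul_le_of_le_one_left zero_le hr
  calc _ = γ V • γ.restrict U + γ U • γ.restrict V := by simp
    _ ≤ γ.restrict U + γ.restrict V := add_le_add (smul_le prob_le_one _) (smul_le prob_le_one _)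
    _ = γ.restrict (U ∪ V) := (Measure.restrict_union hUV hV).symm
    _ ≤ γ := Measure.restrict_le_self

section Swap

variable {ι : Type*} {X : ι → Type*} [∀ i, MeasurableSpace (X i)]
  (s : Finset ι) [∀ j, Decidable (j ∈ s)]

theorem Measure.map_eval_map_piecewise_add_map_piecewise (σ : Measure ((∀ i, X i) × (∀ i, X i)))
    (i : ι) :
    (σ.map (fun q => s.piecewise q.1 q.2) + σ.map (fun q => s.piecewise q.2 q.1)).map
        (fun x => x i) =
      (σ.map Prod.fst + σ.map Prod.snd).map (fun x => x i) := by
  have hi : Measurable (fun x : ∀ i, X i => x i) := measurable_pi_apply i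
  simp only [Measure.map_add _ _ hi,
    Measure.map_map hi (measurable_fst.finset_piecewise s measurable_snd),
    Measure.map_map hi (measurable_snd.finset_piecewise s measurable_fst),
    Measure.map_map hi measurable_fst, Measure.map_map hi measurable_snd]
  by_cases his : i ∈ s
  · simp [Function.comp_def, Finset.piecewise_eq_of_mem _ _ _ his]
  · simp [Function.comp_def, Finset.piecewise_eq_of_notMem _ _ _ his, add_comm]

theorem exists_cheaper_coupling_of_swap_lt_on_prod {γ : Measure (∀ i, X i)}
    [IsProbabilityMeasure γ] {c : (∀ i, X i) → ℝ} (hc : Measurable c) (hint : Integrable c γ)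
    {U V : Set (∀ i, X i)} (hU : MeasurableSet U) (hV : MeasurableSet V) (hUV : Disjoint U V)
    (hγU : γ U ≠ 0) (hγV : γ V ≠ 0) {C : ℝ}
    (hbdd : ∀ q ∈ U ×ˢ V, ‖c (s.piecewise q.1 q.2)‖ + ‖c (s.piecewise q.2 q.1)‖ ≤ C)
    (hgain : ∀ q ∈ U ×ˢ V, c (s.piecewise q.1 q.2) + c (s.piecewise q.2 q.1) < c q.1 + c q.2) :
    ∃ γ' : Measure (∀ i, X i), IsProbabilityMeasure γ' ∧
      (∀ i, γ'.map (fun x => x i) = γ.map (fun x => x i)) ∧ ∫ x, c x ∂γ' < ∫ x, c x ∂γ := by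
  set S : (∀ i, X i) × (∀ i, X i) → ∀ i, X i := fun q => s.piecewise q.1 q.2
  set St : (∀ i, X i) × (∀ i, X i) → ∀ i, X i := fun q => s.piecewise q.2 q.1
  have hS : Measurable S := measurable_fst.finset_piecewise s measurable_snd
  have hSt : Measurable St := measurable_snd.finset_piecewise s measurable_fst
  set σ := (γ.restrict U).prod (γ.restrict V) with hσ_def
  have hσ : ∀ᵐ q ∂σ, q ∈ U ×ˢ V := by
    rw [hσ_def, Measure.prod_restrict]
    exact ae_restrict_mem (hU.prod hV)
  have : NeZero σ := by
    refine ⟨Measure.measure_univ_ne_zero.1 ?_⟩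
    rw [hσ_def, ← univ_prod_univ, Measure.prod_prod]
    simp [hγU, hγV]
  have hle : σ.map Prod.fst + σ.map Prod.snd ≤ γ :=
    Measure.map_fst_add_map_snd_restrict_prod_le hUV hV
  have hfst : Integrable (c ∘ Prod.fst) σ :=
    (integrable_map_measure hc.aestronglyMeasurable measurable_fst.aemeasurable).1
      (hint.mono_measure ((Measure.le_add_right le_rfl).trans hle))
  have hsnd : Integrable (c ∘ Prod.snd) σ :=
    (integrable_map_measure hc.aestronglyMeasurable measurable_snd.aemeasurable).1
      (hint.mono_measure ((Measure.le_add_left le_rfl).trans hle))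
  have hcS : Integrable (c ∘ S) σ := .of_bound (hc.comp hS).aestronglyMeasurable C
    (hσ.mono fun q hq => (le_add_of_nonneg_right (norm_nonneg _)).trans (hbdd q hq))
  have hcSt : Integrable (c ∘ St) σ := .of_bound (hc.comp hSt).aestronglyMeasurable C
    (hσ.mono fun q hq => (le_add_of_nonneg_left (norm_nonneg _)).trans (hbdd q hq))
  refine ⟨γ - (σ.map Prod.fst + σ.map Prod.snd) + (σ.map S + σ.map St), ?_, fun i => ?_, ?_⟩
  · refine Measure.isProbabilityMeasure_sub_add hle ?_
    simp only [Measure.add_apply, Measure.map_apply measurable_fst MeasurableSet.univ,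
      Measure.map_apply measurable_snd MeasurableSet.univ,
      Measure.map_apply hS MeasurableSet.univ, Measure.map_apply hSt MeasurableSet.univ,
      preimage_univ]
  · exact Measure.map_sub_add_of_map_eq hle (measurable_pi_apply i)
      (Measure.map_eval_map_piecewise_add_map_piecewise s σ i).symm
  · have hν' : Integrable c (σ.map S + σ.map St) :=
      ((integrable_map_measure hc.aestronglyMeasurable hS.aemeasurable).2 hcS).add_measure
        ((integrable_map_measure hc.aestronglyMeasurable hSt.aemeasurable).2 hcSt)
    have hpos := integral_pos_of_ae_pos (hσ.mono fun q hq => sub_pos.2 (hgain q hq))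
      ((hfst.add hsnd).sub (hcS.add hcSt))
    have hsplit := integral_sub (hfst.add hsnd) (hcS.add hcSt)
    simp only [Pi.add_apply, Function.comp_apply] at hsplit
    rw [integral_sub_add_of_le hle hint hν',
      integral_map_add_map measurable_fst measurable_snd hc hfst hsnd,
      integral_map_add_map hS hSt hc hcS hcSt]
    linarith

theorem exists_cheaper_coupling_of_swap_lt [∀ i, TopologicalSpace (X i)] [∀ i, T2Space (X i)]
    [OpensMeasurableSpace (∀ i, X i)] {γ : Measure (∀ i, X i)} [IsProbabilityMeasure γ]
    {c : (∀ i, X i) → ℝ} (hc : Continuous c) (hint : Integrable c γ) {y yt : ∀ i, X i}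
    (hy : y ∈ γ.support) (hyt : yt ∈ γ.support)
    (hgain : c (s.piecewise y yt) + c (s.piecewise yt y) < c y + c yt) :
    ∃ γ' : Measure (∀ i, X i), IsProbabilityMeasure γ' ∧
      (∀ i, γ'.map (fun x => x i) = γ.map (fun x => x i)) ∧ ∫ x, c x ∂γ' < ∫ x, c x ∂γ := by
  have hcS : Continuous fun q : (∀ i, X i) × (∀ i, X i) => c (s.piecewise q.1 q.2) :=
    hc.comp (continuous_fst.finset_piecewise s continuous_snd)
  have hcSt : Continuous fun q : (∀ i, X i) × (∀ i, X i) => c (s.piecewise q.2 q.1) :=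
    hc.comp (continuous_snd.finset_piecewise s continuous_fst)
  have hne : y ≠ yt := by rintro rfl; simp [Finset.piecewise_same] at hgain
  have hgain_near := (hcS.add hcSt).continuousAt.eventually_lt (x₀ := (y, yt))
    ((hc.comp continuous_fst).add (hc.comp continuous_snd)).continuousAt hgain
  have hbdd_near := (hcS.norm.add hcSt.norm).continuousAt.eventually_lt (x₀ := (y, yt))
    continuousAt_const (lt_add_one _)
  obtain ⟨U, V, hU, hV, hyU, hytV, hUV, hUVW⟩ :=
    exists_disjoint_isOpen_prod_subset hne (hbdd_near.and hgain_near)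
  exact exists_cheaper_coupling_of_swap_lt_on_prod s hc.measurable hint hU.measurableSet
    hV.measurableSet hUV ((Measure.mem_support_iff_forall y).1 hy U (hU.mem_nhds hyU)).ne'
    ((Measure.mem_support_iff_forall yt).1 hyt V (hV.mem_nhds hytV)).ne'
    (fun q hq => (hUVW hq).1.le) (fun q hq => (hUVW hq).2)

end Swap

end MeasureTheory

theorem stmt13_general (m : ℕ)
    (M : Fin m → Type*) [∀ i, TopologicalSpace (M i)] [∀ i, PolishSpace (M i)]
    [∀ i, MeasurableSpace (M i)] [∀ i, BorelSpace (M i)]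
    (μ : ∀ i, Measure (M i))
    (c : (∀ i, M i) → ℝ) (hc : Continuous c)
    (γ : Measure (∀ i, M i)) [IsProbabilityMeasure γ]
    (hmarg : ∀ i, γ.map (fun x => x i) = μ i)
    (hint : Integrable c γ)
    (hopt : ∀ γ' : Measure (∀ i, M i), IsProbabilityMeasure γ' →
      (∀ i, γ'.map (fun x => x i) = μ i) → ∫ x, c x ∂γ ≤ ∫ x, c x ∂γ') :
    ∀ p : Finset (Fin m), p.Nonempty → p ≠ Finset.univ →
      ∀ y ∈ {x : ∀ i, M i | ∀ U : Set (∀ i, M i), IsOpen U → x ∈ U → 0 < γ U},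
      ∀ yt ∈ {x : ∀ i, M i | ∀ U : Set (∀ i, M i), IsOpen U → x ∈ U → 0 < γ U},
        c y + c yt ≤ c (fun i => if i ∈ p then y i else yt i)
          + c (fun i => if i ∈ p then yt i else y i) := by
  intro p _ _ y hy yt hyt
  have mem_support (x : ∀ i, M i) (hx : ∀ U, IsOpen U → x ∈ U → 0 < γ U) : x ∈ γ.support := by
    rw [Measure.support_eq_forall_isOpen]
    exact fun U hxU hU => hx U hU hxU
  by_contra! hgain
  obtain ⟨γ', hγ', hmarg', hlt⟩ := exists_cheaper_coupling_of_swap_lt p hc hint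
    (mem_support y hy) (mem_support yt hyt) hgain
  exact hlt.not_ge (hopt γ' hγ' fun i => (hmarg' i).trans (hmarg i))

/-- an optimal multi-marginal coupling has `c`-monotone support
with respect to every partition of the index set into two nonempty parts.  The
support of `γ` is described as the set of points all of whose open
neighbourhoods have positive measure. -/
theorem stmt13 (m : ℕ) (hm : 2 ≤ m)
    (M : Fin m → Type*) [∀ i, TopologicalSpace (M i)] [∀ i, PolishSpace (M i)]
    [∀ i, MeasurableSpace (M i)] [∀ i, BorelSpace (M i)]
    (μ : ∀ i, Measure (M i)) [∀ i, IsProbabilityMeasure (μ i)]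
    (c : (∀ i, M i) → ℝ) (hc : Continuous c)
    (γ : Measure (∀ i, M i)) [IsProbabilityMeasure γ]
    (hmarg : ∀ i, γ.map (fun x => x i) = μ i)
    (hint : Integrable c γ)
    (hopt : ∀ γ' : Measure (∀ i, M i), IsProbabilityMeasure γ' →
      (∀ i, γ'.map (fun x => x i) = μ i) → ∫ x, c x ∂γ ≤ ∫ x, c x ∂γ') :
    ∀ p : Finset (Fin m), p.Nonempty → p ≠ Finset.univ →
      ∀ y ∈ {x : ∀ i, M i | ∀ U : Set (∀ i, M i), IsOpen U → x ∈ U → 0 < γ U},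
      ∀ yt ∈ {x : ∀ i, M i | ∀ U : Set (∀ i, M i), IsOpen U → x ∈ U → 0 < γ U},
        c y + c yt ≤ c (fun i => if i ∈ p then y i else yt i)
          + c (fun i => if i ∈ p then yt i else y i) :=
  stmt13_general m M μ c hc γ hmarg hint hopt
end

section
/- Let m = 4, h : ℝ^n → ℝ strictly convex, c(x,y,z,w) = h(x+y+z+w), and let all four marginals be Lebesgue measure on the unit cube Iⁿ. Then the uniform measures γ₁ on S₁ ∩ (Iⁿ)⁴ (where S₁: y = (1,...,1) - w, z = (1,...,1) - x) and γ₂ on S₂ ∩ (Iⁿ)⁴ (where S₂: y = (1,...,1) - x, z = (1,...,1) - w) are two distinct optimal couplings for this multi-marginal problem; in particular the minimizer is not unique. -/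
open MeasureTheory

/-- Lebesgue measure on the unit cube `Iⁿ`. -/
noncomputable def cubeMeasure (n : ℕ) : Measure (Fin n → ℝ) :=
  (volume : Measure (Fin n → ℝ)).restrict (Set.Icc 0 1)

/-- Uniform measure on `S₁ ∩ (Iⁿ)⁴`, where `S₁ : y = 1 - w, z = 1 - x`,
parametrized by `(x, w)`. -/
noncomputable def gammaOne (n : ℕ) : Measure (Fin 4 → Fin n → ℝ) :=
  Measure.map (fun p : (Fin n → ℝ) × (Fin n → ℝ) => ![p.1, 1 - p.2, 1 - p.1, p.2])
    ((cubeMeasure n).prod (cubeMeasure n))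

/-- Uniform measure on `S₂ ∩ (Iⁿ)⁴`, where `S₂ : y = 1 - x, z = 1 - w`. -/
noncomputable def gammaTwo (n : ℕ) : Measure (Fin 4 → Fin n → ℝ) :=
  Measure.map (fun p : (Fin n → ℝ) × (Fin n → ℝ) => ![p.1, 1 - p.1, 1 - p.2, p.2])
    ((cubeMeasure n).prod (cubeMeasure n))

/-! Whatever the coupling `γ` of the four marginals, each coordinate has mean `(1/2, …, 1/2)`,
so `x + y + z + w` has mean `2` and Jensen's inequality gives `∫ h (x + y + z + w) dγ ≥ h 2`.
Both `γ₁` and `γ₂` are concentrated on `{x + y + z + w = 2}`, hence attain this bound. They differ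
because `γ₁` is concentrated on `{y + w = 1}`, while under `γ₂` this event is `{x = w}`, the
diagonal, which is null for the product of two copies of Lebesgue measure. -/

namespace MeasureTheory

variable {α β : Type*} [MeasurableSpace α] [MeasurableSpace β]

lemma integral_comp_of_ae_eq_const {E F : Type*} [NormedAddCommGroup F] [NormedSpace ℝ F]
    [CompleteSpace F] {μ : Measure α} [IsProbabilityMeasure μ] {f : α → E} {c : E}
    (hf : ∀ᵐ x ∂μ, f x = c) (g : E → F) : ∫ x, g (f x) ∂μ = g c := by
  rw [integral_congr_ae (hf.mono fun x hx => by rw [hx]), integral_const, probReal_univ, one_smul]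

namespace Measure

lemma prod_diagonal_eq_zero [MeasurableEq α] (μ ν : Measure α) [SFinite ν]
    [NullSingletonClass ν] : μ.prod ν (Set.diagonal α) = 0 := by
  have hfiber (x : α) : Prod.mk x ⁻¹' Set.diagonal α = {x} := by
    ext y; simp [eq_comm]
  simp [Measure.prod_apply measurableSet_diagonal, hfiber]

lemma map_prod_comp_fst (μ : Measure α) (ν : Measure β) [IsProbabilityMeasure ν]
    {γ : Type*} [MeasurableSpace γ] {g : α → γ} (hg : Measurable g) :
    (μ.prod ν).map (fun p => g p.1) = μ.map g := by
  change (μ.prod ν).map (g ∘ Prod.fst) = _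
  rw [← map_map hg measurable_fst, map_fst_prod, measure_univ, one_smul]

lemma map_prod_comp_snd (μ : Measure α) [IsProbabilityMeasure μ] (ν : Measure β) [SFinite ν]
    {γ : Type*} [MeasurableSpace γ] {g : β → γ} (hg : Measurable g) :
    (μ.prod ν).map (fun p => g p.2) = ν.map g := by
  change (μ.prod ν).map (g ∘ Prod.snd) = _
  rw [← map_map hg measurable_snd, map_snd_prod, measure_univ, one_smul]

end Measure

end MeasureTheory

theorem ConvexOn.map_sum_integral_le_of_map_eval_eq {ι E : Type*} [Fintype ι]
    [NormedAddCommGroup E] [NormedSpace ℝ E] [CompleteSpace E] [MeasurableSpace E] [BorelSpace E]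
    {φ : E → ℝ} (hφ : ConvexOn ℝ Set.univ φ) (hφc : Continuous φ)
    {γ : Measure (ι → E)} [IsProbabilityMeasure γ] {μ : ι → Measure E}
    (hγ : ∀ i, γ.map (fun x => x i) = μ i) (hμ : ∀ i, Integrable id (μ i))
    (hφγ : Integrable (fun x => φ (∑ i, x i)) γ) :
    φ (∑ i, ∫ y, y ∂μ i) ≤ ∫ x, φ (∑ i, x i) ∂γ := by
  have hμγ (i : ι) : Integrable id (γ.map (fun x => x i)) := by rw [hγ i]; exact hμ i
  have hint (i : ι) : Integrable (fun x => x i) γ :=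
    (hμγ i).comp_measurable (measurable_pi_apply i)
  have hmean (i : ι) : ∫ x, x i ∂γ = ∫ y, y ∂μ i := by
    rw [← hγ i]
    exact (integral_map (φ := fun x : ι → E => x i) (measurable_pi_apply i).aemeasurable
      (hμγ i).1).symm
  have hsum : Integrable (fun x => ∑ i, x i) γ := integrable_finsetSum _ fun i _ => hint i
  calc φ (∑ i, ∫ y, y ∂μ i) = φ (∫ x, ∑ i, x i ∂γ) := by
        simp only [integral_finsetSum _ fun i _ => hint i, hmean]
    _ ≤ ∫ x, φ (∑ i, x i) ∂γ :=
        hφ.map_integral_le hφc.continuousOn isClosed_univ (.of_forall fun _ => trivial) hsum hφγ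

instance (n : ℕ) : IsProbabilityMeasure (cubeMeasure n) := by
  constructor
  simp [cubeMeasure, Real.volume_Icc_pi]

lemma measurePreserving_one_sub_cubeMeasure (n : ℕ) :
    MeasurePreserving (fun y : Fin n → ℝ => 1 - y) (cubeMeasure n) (cubeMeasure n) := by
  have hcube : (fun y : Fin n → ℝ => 1 - y) ⁻¹' Set.Icc 0 1 = Set.Icc 0 1 := by
    ext y
    simp only [Set.mem_preimage, Set.mem_Icc, sub_nonneg, sub_le_self_iff]
    tauto
  simpa only [cubeMeasure, hcube] using
    (Measure.measurePreserving_sub_left volume (1 : Fin n → ℝ)).restrict_preimage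
      (measurableSet_Icc (a := 0) (b := 1))

instance (n : ℕ) [NeZero n] : NullSingletonClass (cubeMeasure n) := by
  unfold cubeMeasure
  infer_instance

lemma integrable_id_cubeMeasure (n : ℕ) : Integrable id (cubeMeasure n) :=
  continuous_id.continuousOn.integrableOn_compact isCompact_Icc

lemma integral_id_cubeMeasure (n : ℕ) : ∫ y, y ∂cubeMeasure n = fun _ => 1 / 2 := by
  have hid := integrable_id_cubeMeasure n
  have hsymm : ∫ y, (1 - y) ∂cubeMeasure n = ∫ y, y ∂cubeMeasure n :=
    (measurePreserving_one_sub_cubeMeasure n).integral_comp (measurableEmbedding_subLeft 1)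
      (fun y => y)
  have htwice : ∫ y, y ∂cubeMeasure n + ∫ y, y ∂cubeMeasure n = 1 := by
    nth_rewrite 2 [← hsymm]
    rw [← integral_add (f := fun y => y) (g := fun y => 1 - y) hid ((integrable_const 1).sub hid)]
    simp
  funext i
  have := congrFun htwice i
  simp only [Pi.add_apply, Pi.one_apply] at this
  linarith

section Gamma

variable (n : ℕ)

instance : IsProbabilityMeasure (gammaOne n) :=
  Measure.isProbabilityMeasure_map (by fun_prop)

instance : IsProbabilityMeasure (gammaTwo n) :=
  Measure.isProbabilityMeasure_map (by fun_prop)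

lemma gammaOne_map_eval (i : Fin 4) : (gammaOne n).map (fun x => x i) = cubeMeasure n := by
  have hsub := measurePreserving_one_sub_cubeMeasure n
  rw [gammaOne, Measure.map_map (measurable_pi_apply i) (by fun_prop)]
  fin_cases i
  · exact (Measure.map_prod_comp_fst _ _ measurable_id).trans Measure.map_id
  · exact (Measure.map_prod_comp_snd _ _ hsub.measurable).trans hsub.map_eq
  · exact (Measure.map_prod_comp_fst _ _ hsub.measurable).trans hsub.map_eq
  · exact (Measure.map_prod_comp_snd _ _ measurable_id).trans Measure.map_id

lemma gammaTwo_map_eval (i : Fin 4) : (gammaTwo n).map (fun x => x i) = cubeMeasure n := by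
  have hsub := measurePreserving_one_sub_cubeMeasure n
  rw [gammaTwo, Measure.map_map (measurable_pi_apply i) (by fun_prop)]
  fin_cases i
  · exact (Measure.map_prod_comp_fst _ _ measurable_id).trans Measure.map_id
  · exact (Measure.map_prod_comp_fst _ _ hsub.measurable).trans hsub.map_eq
  · exact (Measure.map_prod_comp_snd _ _ hsub.measurable).trans hsub.map_eq
  · exact (Measure.map_prod_comp_snd _ _ measurable_id).trans Measure.map_id

lemma ae_gammaOne_sum_eq_two : ∀ᵐ x ∂gammaOne n, ∑ i, x i = 2 := by
  rw [gammaOne, ae_map_iff (by fun_prop) (measurableSet_eq_fun (by fun_prop) measurable_const)]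
  refine .of_forall fun p => ?_
  simp only [Fin.sum_univ_four, Matrix.cons_val_zero, Matrix.cons_val_one, Matrix.cons_val]
  ring

lemma ae_gammaTwo_sum_eq_two : ∀ᵐ x ∂gammaTwo n, ∑ i, x i = 2 := by
  rw [gammaTwo, ae_map_iff (by fun_prop) (measurableSet_eq_fun (by fun_prop) measurable_const)]
  refine .of_forall fun p => ?_
  simp only [Fin.sum_univ_four, Matrix.cons_val_zero, Matrix.cons_val_one, Matrix.cons_val]
  ring

lemma ae_gammaOne_eval_one_add_eval_three : ∀ᵐ x ∂gammaOne n, x 1 + x 3 = 1 := by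
  rw [gammaOne, ae_map_iff (by fun_prop) (measurableSet_eq_fun (by fun_prop) measurable_const)]
  exact .of_forall fun p => by simp

lemma ae_gammaTwo_eval_one_add_eval_three_ne [NeZero n] :
    ∀ᵐ x ∂gammaTwo n, x 1 + x 3 ≠ 1 := by
  rw [gammaTwo, ae_map_iff (p := fun x : Fin 4 → Fin n → ℝ => x 1 + x 3 ≠ 1) (by fun_prop)
    (measurableSet_eq_fun (by fun_prop) measurable_const).compl]
  filter_upwards [measure_eq_zero_iff_ae_notMem.mp (Measure.prod_diagonal_eq_zero
    (cubeMeasure n) (cubeMeasure n))] with p hp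
  contrapose! hp
  simp only [Matrix.cons_val_one, Matrix.cons_val_zero, Matrix.cons_val] at hp
  change p.1 = p.2
  linear_combination -hp

lemma gammaOne_ne_gammaTwo [NeZero n] : gammaOne n ≠ gammaTwo n := by
  intro heq
  have hone := ae_gammaOne_eval_one_add_eval_three n
  rw [heq] at hone
  obtain ⟨x, hx, hnx⟩ := (hone.and (ae_gammaTwo_eval_one_add_eval_three_ne n)).exists
  exact hnx hx

end Gamma

/-- for `c(x,y,z,w) = h(x+y+z+w)` with `h` strictly convex and
all four marginals Lebesgue measure on the unit cube, `γ₁` and `γ₂` are two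
distinct optimal couplings; in particular the minimizer is not unique. -/
theorem stmt15 (n : ℕ) (hn : 1 ≤ n)
    (h : (Fin n → ℝ) → ℝ) (hconv : StrictConvexOn ℝ Set.univ h) :
    (∀ i : Fin 4, (gammaOne n).map (fun x => x i) = cubeMeasure n) ∧
    (∀ i : Fin 4, (gammaTwo n).map (fun x => x i) = cubeMeasure n) ∧
    (∀ γ' : Measure (Fin 4 → Fin n → ℝ), IsProbabilityMeasure γ' →
      (∀ i, γ'.map (fun x => x i) = cubeMeasure n) →
      Integrable (fun x => h (x 0 + x 1 + x 2 + x 3)) γ' →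
      (∫ x, h (x 0 + x 1 + x 2 + x 3) ∂(gammaOne n)
          ≤ ∫ x, h (x 0 + x 1 + x 2 + x 3) ∂γ') ∧
      (∫ x, h (x 0 + x 1 + x 2 + x 3) ∂(gammaTwo n)
          ≤ ∫ x, h (x 0 + x 1 + x 2 + x 3) ∂γ')) ∧
    gammaOne n ≠ gammaTwo n := by
  have : NeZero n := ⟨by omega⟩
  have hcont : Continuous h := continuousOn_univ.mp (hconv.convexOn.continuousOn isOpen_univ)
  have hcost_one : ∫ x, h (x 0 + x 1 + x 2 + x 3) ∂gammaOne n = h 2 := by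
    simpa [Fin.sum_univ_four] using integral_comp_of_ae_eq_const (ae_gammaOne_sum_eq_two n) h
  have hcost_two : ∫ x, h (x 0 + x 1 + x 2 + x 3) ∂gammaTwo n = h 2 := by
    simpa [Fin.sum_univ_four] using integral_comp_of_ae_eq_const (ae_gammaTwo_sum_eq_two n) h
  have hmeans : ∑ _i : Fin 4, ∫ y, y ∂cubeMeasure n = 2 := by
    ext
    norm_num [integral_id_cubeMeasure]
  refine ⟨gammaOne_map_eval n, gammaTwo_map_eval n, fun γ _ hγ hγh => ?_,
    gammaOne_ne_gammaTwo n⟩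
  have hjensen := hconv.convexOn.map_sum_integral_le_of_map_eval_eq hcont hγ
    (fun _ => integrable_id_cubeMeasure n) (by simpa [Fin.sum_univ_four] using hγh)
  simp only [hmeans, Fin.sum_univ_four] at hjensen
  rw [hcost_one, hcost_two]
  exact ⟨hjensen, hjensen⟩
end
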